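/- For every integer k ≥ 0 define the polynomial U_k(t) = Σ_{j=0}^{k} C(2k,2j)·(1−t)^{2k−2j}·(−4t)^{j}. Then for all integers k ≥ 0 and all real t, U_{k+2}(t) = 2(t² − 6t + 1)·U_{k+1}(t) − (1+t)⁴·U_k(t). -/

import Mathlib

/-! With `a = 1 - t` and `s` a complex square root of `-4t`, the binomial expansion gives
`2 U_k(t) = x^k + y^k` for `x = (a + s)^2`, `y = (a - s)^2`. The power sums `x^k + y^k` satisfy
the recurrence with coefficients `x + y = 2(t² - 6t + 1)` and `x y = (1 + t)^4`. -/

/-- The polynomial `U_k(t) = Σ_{j=0}^{k} C(2k,2j) (1−t)^{2k−2j} (−4t)^j`. -/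
noncomputable def Upoly (k : ℕ) (t : ℝ) : ℝ :=
  ∑ j ∈ Finset.range (k+1),
    ((2*k).choose (2*j) : ℝ) * (1-t)^(2*k-2*j) * (-4*t)^j

open Finset

theorem sum_range_two_mul_add_one_of_odd_eq_zero {M : Type*} [AddCommMonoid M] (f : ℕ → M)
    (hf : ∀ m, f (2 * m + 1) = 0) (n : ℕ) :
    ∑ m ∈ range (2 * n + 1), f m = ∑ j ∈ range (n + 1), f (2 * j) := by
  induction n with
  | zero => simp
  | succ n ih =>
    rw [show 2 * (n + 1) + 1 = 2 * n + 1 + 1 + 1 by ring, sum_range_succ, sum_range_succ, ih, hf,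
      add_zero, sum_range_succ _ (n + 1), mul_add_one]

theorem add_pow_two_mul_add_sub_pow_two_mul {R : Type*} [CommRing R] (a s : R) (k : ℕ) :
    (a + s) ^ (2 * k) + (a - s) ^ (2 * k) =
      2 * ∑ j ∈ range (k + 1), ((2 * k).choose (2 * j) : R) * a ^ (2 * k - 2 * j) * (s ^ 2) ^ j := by
  rw [add_comm a, sub_eq_neg_add, add_pow, add_pow, ← sum_add_distrib,
    sum_range_two_mul_add_one_of_odd_eq_zero _ (fun m => by rw [Odd.neg_pow ⟨m, rfl⟩]; ring),
    mul_sum]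
  refine sum_congr rfl fun j _ => ?_
  rw [Even.neg_pow ⟨j, two_mul j⟩, pow_mul]
  ring

theorem pow_add_pow_add_two {R : Type*} [CommRing R] (x y : R) (k : ℕ) :
    x ^ (k + 2) + y ^ (k + 2) = (x + y) * (x ^ (k + 1) + y ^ (k + 1)) - x * y * (x ^ k + y ^ k) := by
  ring

theorem two_mul_Upoly_eq_pow_add_pow (k : ℕ) (t : ℝ) (s : ℂ) (hs : s ^ 2 = -4 * t) :
    2 * (Upoly k t : ℂ) = ((1 - t + s) ^ 2) ^ k + ((1 - t - s) ^ 2) ^ k := by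
  rw [← pow_mul, ← pow_mul, add_pow_two_mul_add_sub_pow_two_mul, hs, Upoly]
  push_cast
  rfl

/-- For all `k ≥ 0` and all real `t`,
`U_{k+2}(t) = 2(t² − 6t + 1) U_{k+1}(t) − (1+t)⁴ U_k(t)`. -/
theorem stmt_12 (k : ℕ) (t : ℝ) :
    Upoly (k+2) t = 2*(t^2 - 6*t + 1) * Upoly (k+1) t - (1+t)^4 * Upoly k t := by
  obtain ⟨s, hs⟩ := IsAlgClosed.exists_pow_nat_eq (-4 * (t : ℂ)) two_pos
  have hsum : (1 - t + s) ^ 2 + (1 - t - s) ^ 2 = 2 * ((t : ℂ) ^ 2 - 6 * t + 1) := by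
    linear_combination 2 * hs
  have hprod : (1 - t + s) ^ 2 * (1 - t - s) ^ 2 = (1 + (t : ℂ)) ^ 4 := by
    linear_combination (s ^ 2 - 4 * t - 2 * (1 - t) ^ 2) * hs
  have hrec := pow_add_pow_add_two ((1 - t + s) ^ 2) ((1 - t - s) ^ 2) k
  rw [← two_mul_Upoly_eq_pow_add_pow _ _ _ hs, ← two_mul_Upoly_eq_pow_add_pow _ _ _ hs,
    ← two_mul_Upoly_eq_pow_add_pow _ _ _ hs, hsum, hprod] at hrec
  apply Complex.ofReal_injective
  push_cast
  linear_combination hrec / 2
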